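/- arXiv:1808.08805 — 6 statements merged into one kernel-verified Lean document; each statement's English description precedes it below -/
import Mathlib

section
/- For each positive integer k and every real number s, the approximating function satisfies the sign condition s·f_k(s) ≥ 0. -/
/-!
Since `f` has the sign of its argument, the primitive `G` is nondecreasing on `[0, ∞)` and
nonincreasing on `(-∞, 0]`. On each of the six pieces, `f_k s` is a multiple of an increment of `G`
taken on the same side of `0` as `s`, with a coefficient making `s * f_k s` a product of two factors
of equal sign.
-/

open MeasureTheory intervalIntegral Real

theorem monotoneOn_integral_of_mul_nonneg {f : ℝ → ℝ} (hf : Continuous f)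
    (hsign : ∀ s, 0 ≤ s * f s) : MonotoneOn (fun s => ∫ t in (0:ℝ)..s, f t) (Set.Ici 0) := by
  have hderiv x := (hf.integral_hasStrictDerivAt 0 x).hasDerivAt
  refine monotoneOn_of_deriv_nonneg (convex_Ici 0)
    (fun x _ => (hderiv x).continuousAt.continuousWithinAt)
    (fun x _ => (hderiv x).differentiableAt.differentiableWithinAt) fun x hx => ?_
  rw [interior_Ici] at hx
  rw [(hderiv x).deriv]
  exact nonneg_of_mul_nonneg_right (hsign x) hx

theorem antitoneOn_integral_of_mul_nonneg {f : ℝ → ℝ} (hf : Continuous f)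
    (hsign : ∀ s, 0 ≤ s * f s) : AntitoneOn (fun s => ∫ t in (0:ℝ)..s, f t) (Set.Iic 0) := by
  have hderiv x := (hf.integral_hasStrictDerivAt 0 x).hasDerivAt
  refine antitoneOn_of_deriv_nonpos (convex_Iic 0)
    (fun x _ => (hderiv x).continuousAt.continuousWithinAt)
    (fun x _ => (hderiv x).differentiableAt.differentiableWithinAt) fun x hx => ?_
  rw [interior_Iic] at hx
  rw [(hderiv x).deriv]
  exact nonpos_of_mul_nonneg_right (hsign x) hx

theorem MonotoneOn.mul_mul_sub_nonneg {G : ℝ → ℝ} (hG : MonotoneOn G (Set.Ici 0)) {s c a b : ℝ}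
    (hs : 0 ≤ s) (hc : 0 ≤ c) (ha : 0 ≤ a) (hab : a ≤ b) : 0 ≤ s * (c * (G b - G a)) :=
  mul_nonneg hs (mul_nonneg hc (sub_nonneg.2 (hG ha (ha.trans hab) hab)))

theorem AntitoneOn.mul_mul_sub_nonneg {G : ℝ → ℝ} (hG : AntitoneOn G (Set.Iic 0)) {s c a b : ℝ}
    (hs : s ≤ 0) (hc : c ≤ 0) (hab : a ≤ b) (hb : b ≤ 0) : 0 ≤ s * (c * (G a - G b)) :=
  mul_nonneg_of_nonpos_of_nonpos hs
    (mul_nonpos_of_nonpos_of_nonneg hc (sub_nonneg.2 (hG (hab.trans hb) hb hab)))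

theorem stmt_0
    (f : ℝ → ℝ) (hf : Continuous f) (hsign : ∀ s : ℝ, s * f s ≥ 0)
    (G : ℝ → ℝ) (hG : ∀ s : ℝ, G s = ∫ t in (0:ℝ)..s, f t)
    (fk : ℕ → ℝ → ℝ)
    (h1 : ∀ (k : ℕ), 0 < k → ∀ s : ℝ, s ≤ -(k:ℝ) →
      fk k s = -(k:ℝ) * (G (-(k:ℝ) - 1/(k:ℝ)) - G (-(k:ℝ))))
    (h2 : ∀ (k : ℕ), 0 < k → ∀ s : ℝ, -(k:ℝ) ≤ s → s ≤ -(1/(k:ℝ)) →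
      fk k s = -(k:ℝ) * (G (s - 1/(k:ℝ)) - G s))
    (h3 : ∀ (k : ℕ), 0 < k → ∀ s : ℝ, -(1/(k:ℝ)) ≤ s → s ≤ 0 →
      fk k s = (k:ℝ)^2 * s * (G (-(2/(k:ℝ))) - G (-(1/(k:ℝ)))))
    (h4 : ∀ (k : ℕ), 0 < k → ∀ s : ℝ, 0 ≤ s → s ≤ 1/(k:ℝ) →
      fk k s = (k:ℝ)^2 * s * (G (2/(k:ℝ)) - G (1/(k:ℝ))))
    (h5 : ∀ (k : ℕ), 0 < k → ∀ s : ℝ, 1/(k:ℝ) ≤ s → s ≤ (k:ℝ) →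
      fk k s = (k:ℝ) * (G (s + 1/(k:ℝ)) - G s))
    (h6 : ∀ (k : ℕ), 0 < k → ∀ s : ℝ, (k:ℝ) ≤ s →
      fk k s = (k:ℝ) * (G ((k:ℝ) + 1/(k:ℝ)) - G (k:ℝ))) :
    ∀ (k : ℕ), 0 < k → ∀ s : ℝ, s * fk k s ≥ 0 := by
  intro k hk s
  have hG_eq : G = fun s => ∫ t in (0:ℝ)..s, f t := funext hG
  have hmono : MonotoneOn G (Set.Ici 0) := hG_eq ▸ monotoneOn_integral_of_mul_nonneg hf hsign
  have hanti : AntitoneOn G (Set.Iic 0) := hG_eq ▸ antitoneOn_integral_of_mul_nonneg hf hsign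
  have hk0 : (0:ℝ) < k := by exact_mod_cast hk
  have hinv : 0 < 1 / (k:ℝ) := by positivity
  have hinv_le : 1 / (k:ℝ) ≤ 2 / k := by gcongr; norm_num
  rcases le_total s (-k) with hs1 | hs1
  · rw [h1 k hk s hs1]
    exact hanti.mul_mul_sub_nonneg (by linarith) (by linarith) (by linarith) (by linarith)
  rcases le_total s (-(1 / k)) with hs2 | hs2
  · rw [h2 k hk s hs1 hs2]
    exact hanti.mul_mul_sub_nonneg (by linarith) (by linarith) (by linarith) (by linarith)
  rcases le_total s 0 with hs3 | hs3
  · rw [h3 k hk s hs2 hs3]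
    exact hanti.mul_mul_sub_nonneg hs3 (mul_nonpos_of_nonneg_of_nonpos (by positivity) hs3)
      (by linarith) (by linarith)
  rcases le_total s (1 / k) with hs4 | hs4
  · rw [h4 k hk s hs3 hs4]
    exact hmono.mul_mul_sub_nonneg hs3 (by positivity) hinv.le hinv_le
  rcases le_total s k with hs5 | hs5
  · rw [h5 k hk s hs4 hs5]
    exact hmono.mul_mul_sub_nonneg hs3 hk0.le hs3 (by linarith)
  · rw [h6 k hk s hs5]
    exact hmono.mul_mul_sub_nonneg hs3 hk0.le hk0.le (by linarith)
end

section
/- For each positive integer k, the approximating function f_k is Lipschitz: there exists a constant c_k > 0 such that |f_k(ξ) − f_k(η)| ≤ c_k·|ξ − η| for all ξ, η ∈ ℝ. -/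
/-! Each of the six formulas defining `f_k` is either constant (on the two unbounded rays) or a
`C¹` function of `s` (since `G' = f` is continuous), hence Lipschitz on the corresponding compact
interval. Consecutive intervals share an endpoint, and Lipschitz bounds on two intervals meeting at
a point combine, through that point, into one on their union. -/

open Set NNReal

lemma LipschitzOnWith.congr {α β : Type*} [PseudoEMetricSpace α] [PseudoEMetricSpace β] {K : ℝ≥0}
    {f g : α → β} {s : Set α} (hf : LipschitzOnWith K f s) (h : EqOn f g s) :
    LipschitzOnWith K g s := fun x hx y hy => by
  rw [← h hx, ← h hy]
  exact hf hx hy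

section Gluing

variable {E : Type*} [PseudoMetricSpace E] {K : ℝ≥0} {g : ℝ → E}

lemma LipschitzOnWith.union_of_le {s t : Set ℝ} {a : ℝ} (hs : LipschitzOnWith K g s)
    (ht : LipschitzOnWith K g t) (has : a ∈ s) (hat : a ∈ t) (hsa : ∀ x ∈ s, x ≤ a)
    (hta : ∀ y ∈ t, a ≤ y) : LipschitzOnWith K g (s ∪ t) := by
  have cross : ∀ x ∈ s, ∀ y ∈ t, dist (g x) (g y) ≤ K * dist x y := fun x hx y hy =>
    calc dist (g x) (g y) ≤ dist (g x) (g a) + dist (g a) (g y) := dist_triangle _ _ _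
      _ ≤ K * dist x a + K * dist a y :=
        add_le_add (hs.dist_le_mul x hx a has) (ht.dist_le_mul a hat y hy)
      _ = K * dist x y := by
        have := hsa x hx
        have := hta y hy
        rw [Real.dist_eq, Real.dist_eq, Real.dist_eq, abs_of_nonpos (by linarith),
          abs_of_nonpos (by linarith), abs_of_nonpos (by linarith)]
        ring
  refine LipschitzOnWith.of_dist_le_mul fun x hx y hy => ?_
  rcases hx with hx | hx <;> rcases hy with hy | hy
  · exact hs.dist_le_mul x hx y hy
  · exact cross x hx y hy
  · rw [dist_comm, dist_comm x]
    exact cross y hy x hx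
  · exact ht.dist_le_mul x hx y hy

lemma LipschitzOnWith.Iic_union_Icc {a b : ℝ} (hab : a ≤ b) (ha : LipschitzOnWith K g (Iic a))
    (hb : LipschitzOnWith K g (Icc a b)) : LipschitzOnWith K g (Iic b) := by
  rw [← Iic_union_Icc_eq_Iic hab]
  exact ha.union_of_le hb self_mem_Iic (left_mem_Icc.2 hab) (fun _ => id) fun _ hy => hy.1

lemma LipschitzOnWith.Iic_union_Ici {a : ℝ} (ha : LipschitzOnWith K g (Iic a))
    (ha' : LipschitzOnWith K g (Ici a)) : LipschitzWith K g := by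
  rw [← lipschitzOnWith_univ, ← Set.Iic_union_Ici (a := a)]
  exact ha.union_of_le ha' self_mem_Iic self_mem_Ici (fun _ => id) fun _ => id

end Gluing

lemma contDiff_one_integral {f : ℝ → ℝ} (hf : Continuous f) (a : ℝ) :
    ContDiff ℝ 1 fun u => ∫ t in a..u, f t :=
  contDiff_one_iff_deriv.2
    ⟨fun u => (hf.integral_hasStrictDerivAt a u).hasDerivAt.differentiableAt, by
      rwa [funext (Continuous.deriv_integral f hf a)]⟩

lemma exists_lipschitzOnWith_Icc_of_eqOn {φ g : ℝ → ℝ} {a b : ℝ} (hφ : ContDiff ℝ 1 φ)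
    (h : EqOn φ g (Icc a b)) : ∃ K, LipschitzOnWith K g (Icc a b) :=
  (hφ.contDiffOn.exists_lipschitzOnWith one_ne_zero (convex_Icc a b) isCompact_Icc).imp
    fun _ hK => hK.congr h

lemma lipschitzOnWith_of_eqOn_const {g : ℝ → ℝ} {s : Set ℝ} {c : ℝ} (K : ℝ≥0)
    (h : EqOn (fun _ => c) g s) : LipschitzOnWith K g s :=
  (LipschitzWith.const' c).lipschitzOnWith.congr h

theorem stmt_1_general
    (f : ℝ → ℝ) (hf : Continuous f)
    (G : ℝ → ℝ) (hG : ∀ s : ℝ, G s = ∫ t in (0:ℝ)..s, f t)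
    (fk : ℕ → ℝ → ℝ)
    (h1 : ∀ (k : ℕ), 0 < k → ∀ s : ℝ, s ≤ -(k:ℝ) →
      fk k s = -(k:ℝ) * (G (-(k:ℝ) - 1/(k:ℝ)) - G (-(k:ℝ))))
    (h2 : ∀ (k : ℕ), 0 < k → ∀ s : ℝ, -(k:ℝ) ≤ s → s ≤ -(1/(k:ℝ)) →
      fk k s = -(k:ℝ) * (G (s - 1/(k:ℝ)) - G s))
    (h3 : ∀ (k : ℕ), 0 < k → ∀ s : ℝ, -(1/(k:ℝ)) ≤ s → s ≤ 0 →
      fk k s = (k:ℝ)^2 * s * (G (-(2/(k:ℝ))) - G (-(1/(k:ℝ)))))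
    (h4 : ∀ (k : ℕ), 0 < k → ∀ s : ℝ, 0 ≤ s → s ≤ 1/(k:ℝ) →
      fk k s = (k:ℝ)^2 * s * (G (2/(k:ℝ)) - G (1/(k:ℝ))))
    (h5 : ∀ (k : ℕ), 0 < k → ∀ s : ℝ, 1/(k:ℝ) ≤ s → s ≤ (k:ℝ) →
      fk k s = (k:ℝ) * (G (s + 1/(k:ℝ)) - G s))
    (h6 : ∀ (k : ℕ), 0 < k → ∀ s : ℝ, (k:ℝ) ≤ s →
      fk k s = (k:ℝ) * (G ((k:ℝ) + 1/(k:ℝ)) - G (k:ℝ)))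
    :
    ∀ (k : ℕ), 0 < k → ∃ c : ℝ, 0 < c ∧
      ∀ ξ η : ℝ, |fk k ξ - fk k η| ≤ c * |ξ - η| := by
  intro k hk
  have hk1 : (1:ℝ) ≤ k := by exact_mod_cast hk
  have hinv : 1 / (k:ℝ) ≤ k := (div_le_one₀ (by linarith)).2 hk1 |>.trans hk1
  have hinv0 : 0 ≤ 1 / (k:ℝ) := by positivity
  have hG' : ContDiff ℝ 1 G := by
    simpa only [← funext hG] using contDiff_one_integral hf 0
  obtain ⟨K₂, hK₂⟩ := exists_lipschitzOnWith_Icc_of_eqOn (by fun_prop)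
    fun s hs => (h2 k hk s hs.1 hs.2).symm
  obtain ⟨K₃, hK₃⟩ := exists_lipschitzOnWith_Icc_of_eqOn (by fun_prop)
    fun s hs => (h3 k hk s hs.1 hs.2).symm
  obtain ⟨K₄, hK₄⟩ := exists_lipschitzOnWith_Icc_of_eqOn (by fun_prop)
    fun s hs => (h4 k hk s hs.1 hs.2).symm
  obtain ⟨K₅, hK₅⟩ := exists_lipschitzOnWith_Icc_of_eqOn (by fun_prop)
    fun s hs => (h5 k hk s hs.1 hs.2).symm
  set K := K₂ ⊔ K₃ ⊔ K₄ ⊔ K₅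
  have hLip : LipschitzWith K (fk k) :=
    (((((lipschitzOnWith_of_eqOn_const K fun s hs => (h1 k hk s hs).symm).Iic_union_Icc
      (neg_le_neg hinv) (hK₂.weaken (by simp [K]))).Iic_union_Icc (by linarith)
      (hK₃.weaken (by simp [K]))).Iic_union_Icc hinv0
      (hK₄.weaken (by simp [K]))).Iic_union_Icc hinv (hK₅.weaken (by simp [K]))).Iic_union_Ici
      (lipschitzOnWith_of_eqOn_const K fun s hs => (h6 k hk s hs).symm)
  refine ⟨K + 1, by positivity, fun ξ η => ?_⟩
  calc |fk k ξ - fk k η| ≤ K * |ξ - η| := hLip.dist_le_mul ξ η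
    _ ≤ (K + 1) * |ξ - η| := by gcongr; linarith

theorem stmt_1
    (f : ℝ → ℝ) (hf : Continuous f) (hsign : ∀ s : ℝ, s * f s ≥ 0)
    (G : ℝ → ℝ) (hG : ∀ s : ℝ, G s = ∫ t in (0:ℝ)..s, f t)
    (fk : ℕ → ℝ → ℝ)
    (h1 : ∀ (k : ℕ), 0 < k → ∀ s : ℝ, s ≤ -(k:ℝ) →
      fk k s = -(k:ℝ) * (G (-(k:ℝ) - 1/(k:ℝ)) - G (-(k:ℝ))))
    (h2 : ∀ (k : ℕ), 0 < k → ∀ s : ℝ, -(k:ℝ) ≤ s → s ≤ -(1/(k:ℝ)) →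
      fk k s = -(k:ℝ) * (G (s - 1/(k:ℝ)) - G s))
    (h3 : ∀ (k : ℕ), 0 < k → ∀ s : ℝ, -(1/(k:ℝ)) ≤ s → s ≤ 0 →
      fk k s = (k:ℝ)^2 * s * (G (-(2/(k:ℝ))) - G (-(1/(k:ℝ)))))
    (h4 : ∀ (k : ℕ), 0 < k → ∀ s : ℝ, 0 ≤ s → s ≤ 1/(k:ℝ) →
      fk k s = (k:ℝ)^2 * s * (G (2/(k:ℝ)) - G (1/(k:ℝ))))
    (h5 : ∀ (k : ℕ), 0 < k → ∀ s : ℝ, 1/(k:ℝ) ≤ s → s ≤ (k:ℝ) →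
      fk k s = (k:ℝ) * (G (s + 1/(k:ℝ)) - G s))
    (h6 : ∀ (k : ℕ), 0 < k → ∀ s : ℝ, (k:ℝ) ≤ s →
      fk k s = (k:ℝ) * (G ((k:ℝ) + 1/(k:ℝ)) - G (k:ℝ)))
    :
    ∀ (k : ℕ), 0 < k → ∃ c : ℝ, 0 < c ∧
      ∀ ξ η : ℝ, |fk k ξ - fk k η| ≤ c * |ξ - η| :=
  stmt_1_general f hf G hG fk h1 h2 h3 h4 h5 h6
end

section
/- The sequence of approximating functions f_k converges to f uniformly on every bounded subset of ℝ: for every bounded set B ⊂ ℝ and every ε > 0 there exists K such that for all k ≥ K and all s ∈ B, |f_k(s) − f(s)| ≤ ε. -/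
open MeasureTheory intervalIntegral Real

/-!
For `|s| ≥ 1/k` the value `f_k(s)` is the mean of `f` over an interval of length `1/k` ending or
starting at `s`, so uniform continuity of `f` on a compact neighbourhood of `B` makes it `ε`-close
to `f(s)`. For `|s| ≤ 1/k` we have `|f_k(s)| ≤ k|s|` times the mean of `|f|` over an interval
within `2/k` of the origin; the sign condition forces `f 0 = 0`, so both `f_k(s)` and `f(s)` are
small there.
-/

theorem apply_zero_eq_zero_of_mul_apply_nonneg {f : ℝ → ℝ} (hf : ContinuousAt f 0)
    (h : ∀ s, 0 ≤ s * f s) : f 0 = 0 := by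
  apply le_antisymm
  · exact le_of_tendsto (hf.tendsto.mono_left (nhdsWithin_le_nhds (s := Set.Iio 0)))
      (eventually_nhdsWithin_of_forall fun x hx => nonpos_of_mul_nonneg_right (h x) hx)
  · exact ge_of_tendsto (hf.tendsto.mono_left (nhdsWithin_le_nhds (s := Set.Ioi 0)))
      (eventually_nhdsWithin_of_forall fun x hx => nonneg_of_mul_nonneg_right (h x) hx)

theorem sub_eq_integral_of_eq_integral {f G : ℝ → ℝ} (hf : Continuous f)
    (hG : ∀ s, G s = ∫ t in (0 : ℝ)..s, f t) (a b : ℝ) : G b - G a = ∫ t in a..b, f t := by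
  rw [hG, hG, integral_interval_sub_left (hf.intervalIntegrable _ _) (hf.intervalIntegrable _ _)]

theorem Continuous.exists_pos_abs_sub_le {f : ℝ → ℝ} (hf : Continuous f) (R : ℝ) {η : ℝ}
    (hη : 0 < η) :
    ∃ δ > 0, ∀ x y, |x| ≤ R → |y| ≤ R → |x - y| ≤ δ → |f x - f y| ≤ η := by
  obtain ⟨δ, hδ, hmod⟩ := Metric.uniformContinuousOn_iff_le.mp
    ((isCompact_Icc (a := -R) (b := R)).uniformContinuousOn_of_continuous hf.continuousOn) η hη
  exact ⟨δ, hδ, fun x y hx hy hxy => hmod x (abs_le.mp hx) y (abs_le.mp hy) hxy⟩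

theorem abs_mul_integral_sub_le {f : ℝ → ℝ} {a b c k η : ℝ} (hf : IntervalIntegrable f volume a b)
    (hk : 0 < k) (hab : b - a = 1 / k) (h : ∀ x ∈ Set.Ioc a b, |f x - c| ≤ η) :
    |k * (∫ t in a..b, f t) - c| ≤ η := by
  have hle : a ≤ b := by linarith [one_div_pos.mpr hk]
  have hsub : k * (∫ t in a..b, f t) - c = k * ∫ t in a..b, (f t - c) := by
    rw [integral_sub hf intervalIntegrable_const, intervalIntegral.integral_const, smul_eq_mul, hab]
    field_simp
  have hint : |∫ t in a..b, (f t - c)| ≤ η * (1 / k) := by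
    rw [← hab, ← abs_of_nonneg (sub_nonneg.mpr hle)]
    simpa only [Real.norm_eq_abs] using
      norm_integral_le_of_norm_le_const fun x hx =>
        (Real.norm_eq_abs (f x - c)).trans_le (h x (Set.uIoc_of_le hle ▸ hx))
  calc |k * (∫ t in a..b, f t) - c| = k * |∫ t in a..b, (f t - c)| := by
        rw [hsub, abs_mul, abs_of_pos hk]
    _ ≤ k * (η * (1 / k)) := by gcongr
    _ = η := by field_simp

theorem abs_sq_mul_mul_integral_le {f : ℝ → ℝ} {a b k s η : ℝ}
    (hf : IntervalIntegrable f volume a b) (hk : 0 < k) (hab : b - a = 1 / k) (hs : |s| ≤ 1 / k)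
    (h : ∀ x ∈ Set.Ioc a b, |f x| ≤ η) : |k ^ 2 * s * ∫ t in a..b, f t| ≤ η := by
  have hks : |k * s| ≤ 1 := by
    rw [abs_mul, abs_of_pos hk]
    calc k * |s| ≤ k * (1 / k) := by gcongr
      _ = 1 := by field_simp
  have havg := abs_mul_integral_sub_le hf hk hab (c := 0) fun x hx => by simpa using h x hx
  rw [sub_zero] at havg
  calc |k ^ 2 * s * ∫ t in a..b, f t| = |k * s| * |k * ∫ t in a..b, f t| := by
        rw [← abs_mul]; ring_nf
    _ ≤ 1 * η := by gcongr
    _ = η := one_mul η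

theorem abs_approx_sub_le {f G g : ℝ → ℝ} {k s η : ℝ} (hf : Continuous f)
    (hG : ∀ a b, G b - G a = ∫ t in a..b, f t) (hk : 0 < k) (hsk : |s| ≤ k)
    (h2 : ∀ s, -k ≤ s → s ≤ -(1 / k) → g s = -k * (G (s - 1 / k) - G s))
    (h3 : ∀ s, -(1 / k) ≤ s → s ≤ 0 → g s = k ^ 2 * s * (G (-(2 / k)) - G (-(1 / k))))
    (h4 : ∀ s, 0 ≤ s → s ≤ 1 / k → g s = k ^ 2 * s * (G (2 / k) - G (1 / k)))
    (h5 : ∀ s, 1 / k ≤ s → s ≤ k → g s = k * (G (s + 1 / k) - G s))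
    (hnear_s : ∀ x, |x - s| ≤ 1 / k → |f x - f s| ≤ η)
    (hnear_0 : ∀ x, |x| ≤ 2 / k → |f x| ≤ η / 2) :
    |g s - f s| ≤ η := by
  have hk1 : 0 < 1 / k := one_div_pos.mpr hk
  have h12 : 2 / k = 2 * (1 / k) := by ring
  obtain ⟨hsk_left, hsk_right⟩ := abs_le.mp hsk
  by_cases hs : 1 / k ≤ |s|
  · rcases le_abs'.mp hs with hs | hs
    · rw [h2 s hsk_left (by linarith), show -k * (G (s - 1 / k) - G s) = k * (G s - G (s - 1 / k))
        by ring, hG]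
      refine abs_mul_integral_sub_le (hf.intervalIntegrable _ _) hk (by ring) fun x hx => ?_
      exact hnear_s x (abs_le.mpr ⟨by linarith [hx.1], by linarith [hx.2]⟩)
    · rw [h5 s hs hsk_right, hG]
      refine abs_mul_integral_sub_le (hf.intervalIntegrable _ _) hk (by ring) fun x hx => ?_
      exact hnear_s x (abs_le.mpr ⟨by linarith [hx.1], by linarith [hx.2]⟩)
  · replace hs := not_le.mp hs
    have hfs : |f s| ≤ η / 2 := hnear_0 s (by linarith)
    suffices |g s| ≤ η / 2 by linarith [abs_sub (g s) (f s)]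
    obtain ⟨hs_left, hs_right⟩ := abs_lt.mp hs
    rcases le_total 0 s with hs0 | hs0
    · rw [h4 s hs0 hs_right.le, hG]
      refine abs_sq_mul_mul_integral_le (hf.intervalIntegrable _ _) hk (by ring) hs.le
        fun x hx => hnear_0 x (abs_le.mpr ⟨by linarith [hx.1], hx.2⟩)
    · rw [h3 s hs_left.le hs0, hG, integral_symm, mul_neg, ← neg_mul, ← mul_neg]
      refine abs_sq_mul_mul_integral_le (hf.intervalIntegrable _ _) hk (by ring)
        ((abs_neg s).trans_le hs.le)
        fun x hx => hnear_0 x (abs_le.mpr ⟨hx.1.le, by linarith [hx.2]⟩)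

theorem stmt_2_general
    (f : ℝ → ℝ) (hf : Continuous f) (hsign : ∀ s : ℝ, s * f s ≥ 0)
    (G : ℝ → ℝ) (hG : ∀ s : ℝ, G s = ∫ t in (0:ℝ)..s, f t)
    (fk : ℕ → ℝ → ℝ)
    (h2 : ∀ (k : ℕ), 0 < k → ∀ s : ℝ, -(k:ℝ) ≤ s → s ≤ -(1/(k:ℝ)) →
      fk k s = -(k:ℝ) * (G (s - 1/(k:ℝ)) - G s))
    (h3 : ∀ (k : ℕ), 0 < k → ∀ s : ℝ, -(1/(k:ℝ)) ≤ s → s ≤ 0 →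
      fk k s = (k:ℝ)^2 * s * (G (-(2/(k:ℝ))) - G (-(1/(k:ℝ)))))
    (h4 : ∀ (k : ℕ), 0 < k → ∀ s : ℝ, 0 ≤ s → s ≤ 1/(k:ℝ) →
      fk k s = (k:ℝ)^2 * s * (G (2/(k:ℝ)) - G (1/(k:ℝ))))
    (h5 : ∀ (k : ℕ), 0 < k → ∀ s : ℝ, 1/(k:ℝ) ≤ s → s ≤ (k:ℝ) →
      fk k s = (k:ℝ) * (G (s + 1/(k:ℝ)) - G s))
    :
    ∀ B : Set ℝ, Bornology.IsBounded B → ∀ ε : ℝ, 0 < ε →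
      ∃ K : ℕ, ∀ k : ℕ, K ≤ k → ∀ s ∈ B, |fk k s - f s| ≤ ε := by
  intro B hB ε hε
  have hf0 : f 0 = 0 := apply_zero_eq_zero_of_mul_apply_nonneg hf.continuousAt hsign
  obtain ⟨M, hM⟩ := hB.exists_norm_le
  obtain ⟨δ, hδ, hmod⟩ := hf.exists_pos_abs_sub_le (M + 2) (half_pos hε)
  obtain ⟨K, hK⟩ := exists_nat_gt (max M (2 / δ))
  refine ⟨K, fun k hKk s hs => ?_⟩
  obtain ⟨hkM, hkδ⟩ := max_lt_iff.mp (hK.trans_le (Nat.cast_le.mpr hKk))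
  have hk : (0 : ℝ) < k := (div_pos two_pos hδ).trans hkδ
  have hk0 : 0 < k := Nat.cast_pos.mp hk
  have h1k : 1 / (k : ℝ) ≤ 1 := (div_le_one hk).mpr (Nat.one_le_cast.mpr hk0)
  have h2k : 2 / (k : ℝ) < δ := (div_lt_comm₀ hδ hk).mp hkδ
  have h12 : 2 / (k : ℝ) = 2 * (1 / k) := by ring
  have hsM : |s| ≤ M := hM s hs
  refine abs_approx_sub_le hf (sub_eq_integral_of_eq_integral hf hG) hk (by linarith)
    (h2 k hk0) (h3 k hk0) (h4 k hk0) (h5 k hk0) (fun x hx => ?_) (fun x hx => ?_)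
  · have := hmod x s (by linarith [abs_sub_abs_le_abs_sub x s]) (by linarith) (by linarith)
    linarith
  · simpa [hf0] using hmod x 0 (by linarith [abs_nonneg s])
      (by rw [abs_zero]; linarith [abs_nonneg s]) (by rw [sub_zero]; linarith)

theorem stmt_2
    (f : ℝ → ℝ) (hf : Continuous f) (hsign : ∀ s : ℝ, s * f s ≥ 0)
    (G : ℝ → ℝ) (hG : ∀ s : ℝ, G s = ∫ t in (0:ℝ)..s, f t)
    (fk : ℕ → ℝ → ℝ)
    (h1 : ∀ (k : ℕ), 0 < k → ∀ s : ℝ, s ≤ -(k:ℝ) →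
      fk k s = -(k:ℝ) * (G (-(k:ℝ) - 1/(k:ℝ)) - G (-(k:ℝ))))
    (h2 : ∀ (k : ℕ), 0 < k → ∀ s : ℝ, -(k:ℝ) ≤ s → s ≤ -(1/(k:ℝ)) →
      fk k s = -(k:ℝ) * (G (s - 1/(k:ℝ)) - G s))
    (h3 : ∀ (k : ℕ), 0 < k → ∀ s : ℝ, -(1/(k:ℝ)) ≤ s → s ≤ 0 →
      fk k s = (k:ℝ)^2 * s * (G (-(2/(k:ℝ))) - G (-(1/(k:ℝ)))))
    (h4 : ∀ (k : ℕ), 0 < k → ∀ s : ℝ, 0 ≤ s → s ≤ 1/(k:ℝ) →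
      fk k s = (k:ℝ)^2 * s * (G (2/(k:ℝ)) - G (1/(k:ℝ))))
    (h5 : ∀ (k : ℕ), 0 < k → ∀ s : ℝ, 1/(k:ℝ) ≤ s → s ≤ (k:ℝ) →
      fk k s = (k:ℝ) * (G (s + 1/(k:ℝ)) - G s))
    (h6 : ∀ (k : ℕ), 0 < k → ∀ s : ℝ, (k:ℝ) ≤ s →
      fk k s = (k:ℝ) * (G ((k:ℝ) + 1/(k:ℝ)) - G (k:ℝ)))
    :
    ∀ B : Set ℝ, Bornology.IsBounded B → ∀ ε : ℝ, 0 < ε →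
      ∃ K : ℕ, ∀ k : ℕ, K ≤ k → ∀ s ∈ B, |fk k s - f s| ≤ ε :=
  stmt_2_general f hf hsign G hG fk h2 h3 h4 h5
end

section
/- For every positive integer k and every real number s with |s| ≥ 1/k, the approximating function satisfies 0 ≤ s·f_k(s) ≤ a₃·2^{r₃}·|s|^{r₃}·exp(2^{N/(N-1)}·α·|s|^{N/(N-1)}). In particular, the constant C₁ = a₃·2^{r₃} is independent of k. -/
/-!
For `|s| ≥ 1/k`, `f_k(s)` is `k` times the integral of `f` over an interval of length `1/k`
whose points `t` have the sign of `s` and satisfy `|t| ≤ 2|s|`. Writing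
`s f(t) = (|s|/|t|) · t f(t)`, the growth condition gives
`s f(t) ≤ a₃ |s| |t|^{r₃-1} exp(α|t|^p)` with `p = N/(N-1)`, which is monotone in `|t|`
because `r₃ ≥ 1`; evaluating at `|t| = 2|s|` gives the bound, and averaging over the
interval preserves it.
-/

open MeasureTheory intervalIntegral Real Set

lemma mul_eq_abs_div_abs_mul_mul {s t : ℝ} (hst : 0 < s * t) (x : ℝ) :
    s * x = |s| / |t| * (t * x) := by
  have ht : t ≠ 0 := right_ne_zero_of_mul hst.ne'
  have hst' : 0 < s / t := by
    simpa only [mul_div_mul_right s t ht] using div_pos hst (mul_self_pos.mpr ht)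
  rw [← abs_div, abs_of_pos hst']
  field_simp

lemma mul_le_growth_of_mul_pos {a α r p : ℝ} (ha : 0 ≤ a) (hα : 0 ≤ α) (hr : 1 ≤ r)
    (hp : 0 ≤ p) {s t x : ℝ} (hst : 0 < s * t) (hts : |t| ≤ 2 * |s|)
    (hx : 0 ≤ t * x ∧ t * x ≤ a * |t| ^ r * exp (α * |t| ^ p)) :
    0 ≤ s * x ∧ s * x ≤ a * 2 ^ r * |s| ^ r * exp (2 ^ p * α * |s| ^ p) := by
  have hs : 0 < |s| := abs_pos.mpr (left_ne_zero_of_mul hst.ne')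
  have ht : 0 < |t| := abs_pos.mpr (right_ne_zero_of_mul hst.ne')
  rw [mul_eq_abs_div_abs_mul_mul hst]
  refine ⟨mul_nonneg (by positivity) hx.1, ?_⟩
  calc |s| / |t| * (t * x) ≤ |s| / |t| * (a * |t| ^ r * exp (α * |t| ^ p)) :=
        mul_le_mul_of_nonneg_left hx.2 (by positivity)
    _ = a * (|s| * |t| ^ (r - 1)) * exp (α * |t| ^ p) := by
      rw [rpow_sub_one ht.ne']; field_simp
    _ ≤ a * (|s| * (2 * |s|) ^ (r - 1)) * exp (α * (2 * |s|) ^ p) := by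
      gcongr
    _ = a * 2 ^ (r - 1) * |s| ^ r * exp (2 ^ p * α * |s| ^ p) := by
      rw [mul_rpow zero_le_two hs.le, mul_rpow zero_le_two hs.le, rpow_sub_one hs.ne']
      field_simp
    _ ≤ a * 2 ^ r * |s| ^ r * exp (2 ^ p * α * |s| ^ p) := by
      gcongr
      · norm_num
      · linarith

lemma mul_pos_and_abs_le_of_pos {s t : ℝ} (ht : 0 < t) (hts : t ≤ 2 * s) :
    0 < s * t ∧ |t| ≤ 2 * |s| := by
  have hs : 0 < s := by linarith
  exact ⟨mul_pos hs ht, by rwa [abs_of_pos ht, abs_of_pos hs]⟩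

lemma mul_pos_and_abs_le_of_neg {s t : ℝ} (ht : t < 0) (hts : 2 * s ≤ t) :
    0 < s * t ∧ |t| ≤ 2 * |s| := by
  simpa only [neg_mul_neg, abs_neg] using
    mul_pos_and_abs_le_of_pos (s := -s) (t := -t) (by linarith) (by linarith)

lemma mul_integral_mem_of_forall_mem_Icc {g : ℝ → ℝ} {k a C : ℝ} (hk : 0 < k)
    (hg : IntervalIntegrable g volume a (a + 1 / k))
    (h : ∀ t ∈ Icc a (a + 1 / k), 0 ≤ g t ∧ g t ≤ C) :
    0 ≤ k * ∫ t in a..a + 1 / k, g t ∧ k * ∫ t in a..a + 1 / k, g t ≤ C := by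
  have hle : a ≤ a + 1 / k := by simp [hk.le]
  refine ⟨mul_nonneg hk.le (integral_nonneg hle fun t ht ↦ (h t ht).1), ?_⟩
  calc k * ∫ t in a..a + 1 / k, g t ≤ k * ∫ _ in a..a + 1 / k, C := by
        gcongr
        exact integral_mono_on hle hg intervalIntegrable_const
          fun t ht ↦ (h t ht).2
    _ = C := by rw [intervalIntegral.integral_const, smul_eq_mul]; field_simp; ring

lemma mul_mul_integral_le_growth {f : ℝ → ℝ} (hf : Continuous f) {a α r p : ℝ} (ha : 0 ≤ a)
    (hα : 0 ≤ α) (hr : 1 ≤ r) (hp : 0 ≤ p)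
    (hgrowth : ∀ t, 0 ≤ t * f t ∧ t * f t ≤ a * |t| ^ r * exp (α * |t| ^ p))
    {k s b : ℝ} (hk : 0 < k) (hb : ∀ t ∈ Icc b (b + 1 / k), 0 < s * t ∧ |t| ≤ 2 * |s|) :
    0 ≤ s * (k * ∫ t in b..b + 1 / k, f t) ∧
      s * (k * ∫ t in b..b + 1 / k, f t) ≤ a * 2 ^ r * |s| ^ r * exp (2 ^ p * α * |s| ^ p) := by
  rw [← mul_assoc, mul_comm s, mul_assoc, ← intervalIntegral.integral_const_mul]
  exact mul_integral_mem_of_forall_mem_Icc hk ((continuous_const.mul hf).intervalIntegrable _ _)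
    fun t ht ↦ mul_le_growth_of_mul_pos ha hα hr hp (hb t ht).1 (hb t ht).2 (hgrowth t)

theorem stmt_3_general
    (N : ℕ) (hN : 2 ≤ N) (a₃ α r₃ : ℝ) (ha₃ : 0 < a₃) (hα : 0 < α)
    (hr₃ : (N:ℝ) - 1 < r₃)
    (f : ℝ → ℝ) (hf : Continuous f)
    (hgrowth : ∀ s : ℝ, 0 ≤ s * f s ∧
      s * f s ≤ a₃ * |s| ^ r₃ * Real.exp (α * |s| ^ ((N:ℝ)/((N:ℝ)-1))))
    (G : ℝ → ℝ) (hG : ∀ s : ℝ, G s = ∫ t in (0:ℝ)..s, f t)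
    (fk : ℕ → ℝ → ℝ)
    (h1 : ∀ (k : ℕ), 0 < k → ∀ s : ℝ, s ≤ -(k:ℝ) →
      fk k s = -(k:ℝ) * (G (-(k:ℝ) - 1/(k:ℝ)) - G (-(k:ℝ))))
    (h2 : ∀ (k : ℕ), 0 < k → ∀ s : ℝ, -(k:ℝ) ≤ s → s ≤ -(1/(k:ℝ)) →
      fk k s = -(k:ℝ) * (G (s - 1/(k:ℝ)) - G s))
    (h5 : ∀ (k : ℕ), 0 < k → ∀ s : ℝ, 1/(k:ℝ) ≤ s → s ≤ (k:ℝ) →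
      fk k s = (k:ℝ) * (G (s + 1/(k:ℝ)) - G s))
    (h6 : ∀ (k : ℕ), 0 < k → ∀ s : ℝ, (k:ℝ) ≤ s →
      fk k s = (k:ℝ) * (G ((k:ℝ) + 1/(k:ℝ)) - G (k:ℝ)))
    :
    ∀ (k : ℕ), 0 < k → ∀ s : ℝ, 1/(k:ℝ) ≤ |s| →
      0 ≤ s * fk k s ∧
      s * fk k s ≤ a₃ * (2:ℝ) ^ r₃ * |s| ^ r₃ *
        Real.exp ((2:ℝ) ^ ((N:ℝ)/((N:ℝ)-1)) * α * |s| ^ ((N:ℝ)/((N:ℝ)-1))) := by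
  intro k hk s hs
  have hk' : (0:ℝ) < k := by exact_mod_cast hk
  have hk0 : 0 < 1 / (k:ℝ) := by positivity
  have hk1 : 1 / (k:ℝ) ≤ k :=
    ((div_le_one hk').mpr (Nat.one_le_cast.mpr hk)).trans (Nat.one_le_cast.mpr hk)
  have hN' : (2:ℝ) ≤ N := by exact_mod_cast hN
  have hbound : ∀ a : ℝ, (∀ t ∈ Icc a (a + 1 / (k:ℝ)), 0 < s * t ∧ |t| ≤ 2 * |s|) →
      0 ≤ s * (k * (G (a + 1 / k) - G a)) ∧ s * (k * (G (a + 1 / k) - G a)) ≤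
        a₃ * 2 ^ r₃ * |s| ^ r₃ * exp (2 ^ ((N:ℝ)/(N-1)) * α * |s| ^ ((N:ℝ)/(N-1))) := by
    intro a ha
    rw [hG, hG, integral_interval_sub_left (hf.intervalIntegrable _ _) (hf.intervalIntegrable _ _)]
    exact mul_mul_integral_le_growth hf ha₃.le hα.le (by linarith)
      (div_nonneg (by linarith) (by linarith)) hgrowth hk' ha
  rcases le_or_gt 0 s with hs0 | hs0
  · rw [abs_of_nonneg hs0] at hs
    rcases le_or_gt s k with hsk | hsk
    · rw [h5 k hk s hs hsk]
      exact hbound s fun t ht ↦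
        mul_pos_and_abs_le_of_pos (by linarith [ht.1]) (by linarith [ht.2])
    · rw [h6 k hk s hsk.le]
      exact hbound k fun t ht ↦
        mul_pos_and_abs_le_of_pos (by linarith [ht.1]) (by linarith [ht.2])
  · rw [abs_of_neg hs0] at hs
    rcases le_or_gt (-k : ℝ) s with hsk | hsk
    · have e : s * fk k s = s * (k * (G (s - 1 / k + 1 / k) - G (s - 1 / k))) := by
        rw [h2 k hk s hsk (by linarith), sub_add_cancel]; ring
      rw [e]
      exact hbound _ fun t ht ↦
        mul_pos_and_abs_le_of_neg (by linarith [ht.2]) (by linarith [ht.1])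
    · have e : s * fk k s = s * (k * (G (-k - 1 / k + 1 / k) - G (-k - 1 / k))) := by
        rw [h1 k hk s hsk.le, sub_add_cancel]; ring
      rw [e]
      exact hbound _ fun t ht ↦
        mul_pos_and_abs_le_of_neg (by linarith [ht.2]) (by linarith [ht.1])

theorem stmt_3
    (N : ℕ) (hN : 2 ≤ N) (a₃ α r₃ : ℝ) (ha₃ : 0 < a₃) (hα : 0 < α)
    (hr₃ : (N:ℝ) - 1 < r₃)
    (f : ℝ → ℝ) (hf : Continuous f)
    (hgrowth : ∀ s : ℝ, 0 ≤ s * f s ∧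
      s * f s ≤ a₃ * |s| ^ r₃ * Real.exp (α * |s| ^ ((N:ℝ)/((N:ℝ)-1))))
    (G : ℝ → ℝ) (hG : ∀ s : ℝ, G s = ∫ t in (0:ℝ)..s, f t)
    (fk : ℕ → ℝ → ℝ)
    (h1 : ∀ (k : ℕ), 0 < k → ∀ s : ℝ, s ≤ -(k:ℝ) →
      fk k s = -(k:ℝ) * (G (-(k:ℝ) - 1/(k:ℝ)) - G (-(k:ℝ))))
    (h2 : ∀ (k : ℕ), 0 < k → ∀ s : ℝ, -(k:ℝ) ≤ s → s ≤ -(1/(k:ℝ)) →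
      fk k s = -(k:ℝ) * (G (s - 1/(k:ℝ)) - G s))
    (h3 : ∀ (k : ℕ), 0 < k → ∀ s : ℝ, -(1/(k:ℝ)) ≤ s → s ≤ 0 →
      fk k s = (k:ℝ)^2 * s * (G (-(2/(k:ℝ))) - G (-(1/(k:ℝ)))))
    (h4 : ∀ (k : ℕ), 0 < k → ∀ s : ℝ, 0 ≤ s → s ≤ 1/(k:ℝ) →
      fk k s = (k:ℝ)^2 * s * (G (2/(k:ℝ)) - G (1/(k:ℝ))))
    (h5 : ∀ (k : ℕ), 0 < k → ∀ s : ℝ, 1/(k:ℝ) ≤ s → s ≤ (k:ℝ) →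
      fk k s = (k:ℝ) * (G (s + 1/(k:ℝ)) - G s))
    (h6 : ∀ (k : ℕ), 0 < k → ∀ s : ℝ, (k:ℝ) ≤ s →
      fk k s = (k:ℝ) * (G ((k:ℝ) + 1/(k:ℝ)) - G (k:ℝ)))
    :
    ∀ (k : ℕ), 0 < k → ∀ s : ℝ, 1/(k:ℝ) ≤ |s| →
      0 ≤ s * fk k s ∧
      s * fk k s ≤ a₃ * (2:ℝ) ^ r₃ * |s| ^ r₃ *
        Real.exp ((2:ℝ) ^ ((N:ℝ)/((N:ℝ)-1)) * α * |s| ^ ((N:ℝ)/((N:ℝ)-1))) :=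
  stmt_3_general N hN a₃ α r₃ ha₃ hα hr₃ f hf hgrowth G hG fk h1 h2 h5 h6
end

section
/- For every positive integer k and every real number s with s ≤ −k, there exists η ∈ (−k − 1/k, −k) such that f_k(s) = f(η), and one has the estimate s·f_k(s) ≤ a₃·2^{r₃−1}·|s|^{r₃}·exp(2^{N/(N-1)}·α·|s|^{N/(N-1)}). -/
/-!
`f_k(s)` is the average of `f` over `[-k - 1/k, -k]`, so the mean value theorem for integrals
gives `η`. As `s` and `η` are both negative,
`s f(η) = (|s| / |η|) · η f(η) ≤ a₃ |s| |η|^{r₃-1} exp(α |η|^{N/(N-1)})`, and this bound is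
monotone in `|η|`, where `|η| < k + 1/k ≤ 2|s|`.
-/

open MeasureTheory intervalIntegral Real

theorem exists_mem_Ioo_integral_eq_mul {f : ℝ → ℝ} (hf : Continuous f) {a b : ℝ} (hab : a < b) :
    ∃ η ∈ Set.Ioo a b, ∫ t in a..b, f t = (b - a) * f η := by
  obtain ⟨η, hη, hfη⟩ := exists_eq_interval_average hab.ne hf.continuousOn
  refine ⟨η, by rwa [Set.uIoo_of_lt hab] at hη, ?_⟩
  rw [hfη, interval_average_eq_div]
  field_simp [sub_ne_zero.mpr hab.ne']

theorem mul_le_rpow_mul_exp_of_abs_le_mul {a α r p c s η y : ℝ} (ha : 0 ≤ a) (hα : 0 ≤ α)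
    (hr : 1 ≤ r) (hp : 0 ≤ p) (hs : s ≤ 0) (hη : η < 0) (hηs : |η| ≤ c * |s|)
    (hy : η * y ≤ a * |η| ^ r * exp (α * |η| ^ p)) :
    s * y ≤ a * c ^ (r - 1) * |s| ^ r * exp (c ^ p * α * |s| ^ p) := by
  have hη_pos : 0 < |η| := abs_pos.mpr hη.ne
  have hc : 0 ≤ c := by
    by_contra! hc
    nlinarith [abs_nonneg s]
  have hsy : s * y = |s| / |η| * (η * y) := by
    rw [abs_of_nonpos hs, abs_of_neg hη]
    field_simp [hη.ne]
  calc s * y ≤ |s| / |η| * (a * |η| ^ r * exp (α * |η| ^ p)) := by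
        rw [hsy]; gcongr
    _ = a * |s| * |η| ^ (r - 1) * exp (α * |η| ^ p) := by
        rw [rpow_sub_one hη_pos.ne']; ring
    _ ≤ a * |s| * (c * |s|) ^ (r - 1) * exp (α * (c * |s|) ^ p) := by
        gcongr
    _ = a * c ^ (r - 1) * |s| ^ r * exp (c ^ p * α * |s| ^ p) := by
        have hsr : |s| ^ r = |s| * |s| ^ (r - 1) := by
          rw [← rpow_one_add' (abs_nonneg s) (by linarith), add_sub_cancel]
        rw [mul_rpow hc (abs_nonneg s), mul_rpow hc (abs_nonneg s), hsr,
          show α * (c ^ p * |s| ^ p) = c ^ p * α * |s| ^ p by ring]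
        ring

theorem stmt_7
    (N : ℕ) (hN : 2 ≤ N) (a₃ α r₃ : ℝ) (ha₃ : 0 < a₃) (hα : 0 < α)
    (hr₃ : (N:ℝ) - 1 < r₃)
    (f : ℝ → ℝ) (hf : Continuous f)
    (hgrowth : ∀ s : ℝ, 0 ≤ s * f s ∧
      s * f s ≤ a₃ * |s| ^ r₃ * Real.exp (α * |s| ^ ((N:ℝ)/((N:ℝ)-1))))
    (G : ℝ → ℝ) (hG : ∀ s : ℝ, G s = ∫ t in (0:ℝ)..s, f t)
    (fk : ℕ → ℝ → ℝ)
    (h1 : ∀ (k : ℕ), 0 < k → ∀ s : ℝ, s ≤ -(k:ℝ) →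
      fk k s = -(k:ℝ) * (G (-(k:ℝ) - 1/(k:ℝ)) - G (-(k:ℝ))))
    (k : ℕ) (hk : 0 < k) (s : ℝ) (hs : s ≤ -(k:ℝ)) :
    ∃ η ∈ Set.Ioo (-(k:ℝ) - 1/(k:ℝ)) (-(k:ℝ)), fk k s = f η ∧
      s * fk k s ≤ a₃ * (2:ℝ) ^ (r₃ - 1) * |s| ^ r₃ *
        Real.exp ((2:ℝ) ^ ((N:ℝ)/((N:ℝ)-1)) * α * |s| ^ ((N:ℝ)/((N:ℝ)-1))) := by
  have hk₁ : (1:ℝ) ≤ k := by exact_mod_cast hk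
  have hN₂ : (2:ℝ) ≤ N := by exact_mod_cast hN
  have hinv : 1 / (k:ℝ) ≤ 1 := by rw [div_le_one (by linarith)]; exact hk₁
  obtain ⟨η, hη, hmean⟩ := exists_mem_Ioo_integral_eq_mul hf
    (a := -(k:ℝ) - 1/(k:ℝ)) (b := -(k:ℝ)) (by linarith [show (0:ℝ) < 1 / k by positivity])
  have hfk : fk k s = f η := by
    rw [h1 k hk s hs, hG, hG,
      integral_interval_sub_left (hf.intervalIntegrable _ _) (hf.intervalIntegrable _ _),
      integral_symm, hmean]
    field_simp
    ring
  have hη_le : |η| ≤ 2 * |s| := by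
    rw [abs_of_neg (by linarith [hη.2]), abs_of_neg (by linarith)]
    linarith [hη.1]
  refine ⟨η, hη, hfk, ?_⟩
  rw [hfk]
  exact mul_le_rpow_mul_exp_of_abs_le_mul ha₃.le hα.le (by linarith)
    (div_nonneg (by linarith) (by linarith)) (by linarith) (by linarith [hη.2]) hη_le (hgrowth η).2
end

section
/- For every positive integer k and every real number s with s ≥ k, there exists η ∈ (k, k + 1/k) such that f_k(s) = f(η), and one has the estimate s·f_k(s) ≤ a₃·2^{r₃−1}·|s|^{r₃}·exp(2^{N/(N-1)}·α·|s|^{N/(N-1)}). -/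
open MeasureTheory intervalIntegral Real

theorem le_two_mul_of_lt_add_inv {k s η : ℝ} (hk : 1 ≤ k) (hs : k ≤ s) (hη : η < k + 1 / k) :
    η ≤ 2 * s := by
  have : 1 / k ≤ k := by
    rw [div_le_iff₀ (by linarith)]
    nlinarith
  linarith

theorem rpow_le_two_rpow_mul_rpow {η s r : ℝ} (hη : 0 ≤ η) (hηs : η ≤ 2 * s) (hr : 0 ≤ r) :
    η ^ r ≤ 2 ^ r * s ^ r := by
  rw [← mul_rpow zero_le_two (by linarith)]
  exact rpow_le_rpow hη hηs hr

theorem mul_le_of_growth_bound_at_le_two_mul {a₃ α r p η s y : ℝ} (ha₃ : 0 ≤ a₃) (hα : 0 ≤ α)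
    (hr : 1 ≤ r) (hp : 0 ≤ p) (hη : 0 < η) (hηs : η ≤ 2 * s)
    (hy : η * y ≤ a₃ * η ^ r * exp (α * η ^ p)) :
    s * y ≤ a₃ * 2 ^ (r - 1) * s ^ r * exp (2 ^ p * α * s ^ p) := by
  have hs : 0 < s := by linarith
  have hpow_succ {x : ℝ} (hx : 0 < x) : x ^ r = x * x ^ (r - 1) := by
    rw [← rpow_one_add' hx.le (by linarith), add_sub_cancel]
  have hexp : exp (α * η ^ p) ≤ exp (2 ^ p * α * s ^ p) := by
    rw [exp_le_exp, mul_comm (2 ^ p) α, mul_assoc]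
    exact mul_le_mul_of_nonneg_left (rpow_le_two_rpow_mul_rpow hη.le hηs hp) hα
  calc s * y = s / η * (η * y) := by field_simp
    _ ≤ s / η * (a₃ * η ^ r * exp (α * η ^ p)) := by gcongr
    _ = a₃ * s * η ^ (r - 1) * exp (α * η ^ p) := by rw [hpow_succ hη]; field_simp
    _ ≤ a₃ * s * (2 ^ (r - 1) * s ^ (r - 1)) * exp (2 ^ p * α * s ^ p) := by
        gcongr
        exact rpow_le_two_rpow_mul_rpow hη.le hηs (by linarith)
    _ = a₃ * 2 ^ (r - 1) * s ^ r * exp (2 ^ p * α * s ^ p) := by rw [hpow_succ hs]; ring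

theorem stmt_8
    (N : ℕ) (hN : 2 ≤ N) (a₃ α r₃ : ℝ) (ha₃ : 0 < a₃) (hα : 0 < α)
    (hr₃ : (N:ℝ) - 1 < r₃)
    (f : ℝ → ℝ) (hf : Continuous f)
    (hgrowth : ∀ s : ℝ, 0 ≤ s * f s ∧
      s * f s ≤ a₃ * |s| ^ r₃ * Real.exp (α * |s| ^ ((N:ℝ)/((N:ℝ)-1))))
    (G : ℝ → ℝ) (hG : ∀ s : ℝ, G s = ∫ t in (0:ℝ)..s, f t)
    (fk : ℕ → ℝ → ℝ)
    (h6 : ∀ (k : ℕ), 0 < k → ∀ s : ℝ, (k:ℝ) ≤ s →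
      fk k s = (k:ℝ) * (G ((k:ℝ) + 1/(k:ℝ)) - G (k:ℝ)))
    (k : ℕ) (hk : 0 < k) (s : ℝ) (hs : (k:ℝ) ≤ s) :
    ∃ η ∈ Set.Ioo (k:ℝ) ((k:ℝ) + 1/(k:ℝ)), fk k s = f η ∧
      s * fk k s ≤ a₃ * (2:ℝ) ^ (r₃ - 1) * |s| ^ r₃ *
        Real.exp ((2:ℝ) ^ ((N:ℝ)/((N:ℝ)-1)) * α * |s| ^ ((N:ℝ)/((N:ℝ)-1))) := by
  have hk1 : (1:ℝ) ≤ k := by exact_mod_cast hk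
  have hN2 : (2:ℝ) ≤ N := by exact_mod_cast hN
  obtain ⟨η, hη, hmean⟩ := exists_mem_Ioo_integral_eq_mul hf (a := k) (b := k + 1 / k)
    (by simp only [lt_add_iff_pos_right]; positivity)
  have hfk : fk k s = f η := by
    rw [h6 k hk s hs, hG, hG, integral_interval_sub_left (hf.intervalIntegrable _ _)
      (hf.intervalIntegrable _ _), hmean]
    field_simp
    ring
  refine ⟨η, hη, hfk, ?_⟩
  have hη0 : 0 < η := by linarith [hη.1]
  have hηs := le_two_mul_of_lt_add_inv hk1 hs hη.2
  have hgrowthη := (hgrowth η).2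
  rw [abs_of_pos hη0] at hgrowthη
  rw [hfk, abs_of_pos (by linarith)]
  exact mul_le_of_growth_bound_at_le_two_mul ha₃.le hα.le (by linarith)
    (div_nonneg (by linarith) (by linarith)) hη0 hηs hgrowthη
end
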